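/- arXiv:0704.3499 — 9 statements merged into one kernel-verified Lean document; each statement's English description precedes it below -/
import Mathlib

section
/- Let Γ be a finitely generated group with word length ‖·‖ and translation length ℓ(γ) = inf_η ‖ηγη⁻¹‖, and suppose there exists α > 0 such that [g]_∞ ≥ α·ℓ(g) for all g ∈ Γ, where [g]_∞ is the stable norm in the Cayley graph. If Γ acts by isometries on a metric space X and for some point x ∈ X the orbit map γ ↦ γ·x is a quasi-isometric embedding (i.e., there exist A ≥ 1, B ≥ 0 with A‖γ‖ + B ≥ d(x, γ·x) ≥ A⁻¹‖γ‖ − B for all γ), then the action is well displacing: there exist constants A' > 0, B' ≥ 0 such that d_X(γ) ≥ A'·ℓ(γ) − B' for all γ ∈ Γ. -/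
open Filter

/-- The word length of `γ` with respect to a generating set `S`. -/
noncomputable def wordLength {Γ : Type*} [Group Γ] (S : Set Γ) (γ : Γ) : ℕ :=
  sInf {n | ∃ l : List Γ, (∀ x ∈ l, x ∈ S ∨ x⁻¹ ∈ S) ∧ l.length = n ∧ l.prod = γ}

/-- The translation length `ℓ(γ) = inf_η ‖η γ η⁻¹‖`. -/
noncomputable def transLength {Γ : Type*} [Group Γ] (S : Set Γ) (γ : Γ) : ℕ :=
  sInf {n | ∃ η : Γ, wordLength S (η * γ * η⁻¹) = n}

private lemma dist_pow_smul {Γ : Type*} [Group Γ] {X : Type*} [MetricSpace X] [MulAction Γ X]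
    (hiso : ∀ g : Γ, Isometry fun x : X => g • x) (γ : Γ) (y : X) :
    ∀ n : ℕ, dist y (γ ^ n • y) ≤ n * dist y (γ • y) := by
  intro n
  induction n with
  | zero => simp
  | succ n ih =>
    have h1 : dist y (γ ^ (n + 1) • y) ≤ dist y (γ ^ n • y) + dist (γ ^ n • y) (γ ^ (n+1) • y) :=
      dist_triangle _ _ _
    have h2 : dist (γ ^ n • y) (γ ^ (n + 1) • y) = dist y (γ • y) := by
      rw [pow_succ, mul_smul]
      exact (hiso (γ ^ n)).dist_eq y (γ • y)
    push_cast
    nlinarith [dist_nonneg (x := y) (y := γ • y)]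

/-- If the stable norm dominates the translation length (`[g]_∞ ≥ α ℓ(g)`), then any
isometric action with a quasi-isometrically embedded orbit map is well displacing. -/
theorem orbit_qi_implies_well_displacing {Γ : Type*} [Group Γ]
    (S : Set Γ) (hSfin : S.Finite) (hSgen : Subgroup.closure S = ⊤)
    {X : Type*} [MetricSpace X] [Nonempty X] [MulAction Γ X]
    (hiso : ∀ g : Γ, Isometry fun x : X => g • x)
    (α : ℝ) (hα : 0 < α)
    (hstable : ∀ g : Γ,
      liminf (fun n : ℕ => (wordLength S (g ^ n) : ℝ) / n) atTop
        ≥ α * (transLength S g : ℝ))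
    (x : X) (A B : ℝ) (hA : 1 ≤ A) (hB : 0 ≤ B)
    (horbit : ∀ γ : Γ,
      A * (wordLength S γ : ℝ) + B ≥ dist x (γ • x) ∧
      dist x (γ • x) ≥ A⁻¹ * (wordLength S γ : ℝ) - B) :
    ∃ A' > (0 : ℝ), ∃ B' ≥ (0 : ℝ), ∀ γ : Γ,
      (⨅ y : X, dist y (γ • y)) ≥ A' * (transLength S γ : ℝ) - B' := by
  have hA0 : (0 : ℝ) < A := lt_of_lt_of_le one_pos hA
  refine ⟨α / A, div_pos hα hA0, 0, le_refl 0, fun γ => ?_⟩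
  rw [ge_iff_le, sub_zero]
  refine le_ciInf fun y => ?_
  set d := dist y (γ • y) with hd
  set c := A * (2 * dist x y + B) with hc
  have hdpos : 0 ≤ d := dist_nonneg
  have hcpos : 0 ≤ c := by
    have : 0 ≤ dist x y := dist_nonneg
    positivity
  -- f n ≤ g n for n ≥ 1
  set f : ℕ → ℝ := fun n => (wordLength S (γ ^ n) : ℝ) / n with hf
  set g : ℕ → ℝ := fun n => c / n + A * d with hg
  have hfg : ∀ᶠ n in atTop, f n ≤ g n := by
    filter_upwards [eventually_ge_atTop 1] with n hn
    have hn0 : (0 : ℝ) < n := by exact_mod_cast hn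
    have h1 : dist x (γ ^ n • x) ≤ 2 * dist x y + n * d := by
      have t1 : dist x (γ ^ n • x) ≤ dist x y + dist y (γ ^ n • y) + dist (γ ^ n • y) (γ ^ n • x) :=
        dist_triangle4 _ _ _ _
      have t2 : dist (γ ^ n • y) (γ ^ n • x) = dist y x := (hiso (γ ^ n)).dist_eq y x
      have t3 : dist y (γ ^ n • y) ≤ n * d := dist_pow_smul hiso γ y n
      rw [t2] at t1
      rw [dist_comm y x] at t1
      linarith
    have h2 : A⁻¹ * (wordLength S (γ ^ n) : ℝ) - B ≤ dist x (γ ^ n • x) := (horbit (γ ^ n)).2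
    have h3 : (wordLength S (γ ^ n) : ℝ) ≤ A * (2 * dist x y + B) + n * (A * d) := by
      have h4 : A⁻¹ * (wordLength S (γ ^ n) : ℝ) ≤ 2 * dist x y + B + n * d := by linarith
      have := mul_le_mul_of_nonneg_left h4 hA0.le
      rw [← mul_assoc, mul_inv_cancel₀ hA0.ne', one_mul] at this
      nlinarith
    show (wordLength S (γ ^ n) : ℝ) / n ≤ c / n + A * d
    rw [div_add' _ _ _ hn0.ne', div_le_div_iff_of_pos_right hn0]
    calc (wordLength S (γ ^ n) : ℝ) ≤ A * (2 * dist x y + B) + n * (A * d) := h3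
      _ = c + A * d * n := by rw [hc]; ring
  have hgtend : Tendsto g atTop (nhds (0 + A * d)) := by
    apply Tendsto.add _ tendsto_const_nhds
    exact Tendsto.div_atTop tendsto_const_nhds tendsto_natCast_atTop_atTop
  have hliminfg : liminf g atTop = A * d := by
    rw [hgtend.liminf_eq]; ring
  have hle : liminf f atTop ≤ liminf g atTop := by
    exact liminf_le_liminf hfg (isBoundedUnder_of ⟨0, fun n => by positivity⟩)
      hgtend.isBoundedUnder_le.isCoboundedUnder_ge
  have := hstable γ
  have hαℓ : α * (transLength S γ : ℝ) ≤ A * d := by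
    rw [hliminfg] at hle
    exact le_trans this hle
  rw [div_mul_eq_mul_div, div_le_iff₀ hA0]
  linarith
end

section
/- Suppose a finitely generated group Γ has the U-property: there exist finitely many elements g₁,…,g_p ∈ Γ and positive constants A, B such that ‖γ‖ ≤ A·sup_{1≤i≤p} ℓ(g_i γ) + B for all γ ∈ Γ. Then every well displacing isometric action of Γ on a metric space X (i.e., any action for which there exist α, β > 0 with d(x, γ·x) ≥ α ℓ(γ) − β for all x ∈ X, γ ∈ Γ) has orbit maps which are quasi-isometric embeddings: for every x ∈ X there exist constants C ≥ 1, D ≥ 0 with C⁻¹‖γ‖ − D ≤ d(x, γ·x) ≤ C‖γ‖ + D for all γ ∈ Γ. -/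
section Displacement

variable {Γ X : Type*} [Group Γ] [PseudoMetricSpace X] [MulAction Γ X] [IsIsometricSMul Γ X]

theorem dist_mul_smul_le (x : X) (a b : Γ) :
    dist x ((a * b) • x) ≤ dist x (a • x) + dist x (b • x) :=
  calc dist x ((a * b) • x) ≤ dist x (a • x) + dist (a • x) (a • b • x) := by
        rw [mul_smul]; exact dist_triangle _ _ _
    _ = dist x (a • x) + dist x (b • x) := by rw [dist_smul]

theorem dist_inv_smul (x : X) (a : Γ) : dist x (a⁻¹ • x) = dist x (a • x) := by
  rw [← dist_smul a, smul_inv_smul, dist_comm]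

theorem dist_list_prod_smul_le {S : Set Γ} {M : ℝ} (x : X) (hM : ∀ s ∈ S, dist x (s • x) ≤ M)
    {l : List Γ} (hl : ∀ y ∈ l, y ∈ S ∨ y⁻¹ ∈ S) : dist x (l.prod • x) ≤ M * l.length := by
  induction l with
  | nil => simp
  | cons y t ih =>
    have hy : dist x (y • x) ≤ M := by
      rcases hl y List.mem_cons_self with h | h
      · exact hM y h
      · exact dist_inv_smul x y ▸ hM _ h
    have ht := ih fun z hz => hl z (List.mem_cons_of_mem _ hz)
    calc dist x ((y :: t).prod • x) ≤ dist x (y • x) + dist x (t.prod • x) := by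
          rw [List.prod_cons]; exact dist_mul_smul_le x y t.prod
      _ ≤ M + M * t.length := add_le_add hy ht
      _ = M * (y :: t).length := by simp only [List.length_cons]; push_cast; ring

end Displacement

theorem exists_list_length_eq_wordLength {Γ : Type*} [Group Γ] {S : Set Γ}
    (hS : Subgroup.closure S = ⊤) (γ : Γ) :
    ∃ l : List Γ, (∀ y ∈ l, y ∈ S ∨ y⁻¹ ∈ S) ∧ l.length = wordLength S γ ∧ l.prod = γ := by
  have hγ : γ ∈ (Subgroup.closure S).toSubmonoid := by simp [hS]
  rw [Subgroup.closure_toSubmonoid] at hγ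
  obtain ⟨l, hl, hprod⟩ := Submonoid.exists_list_of_mem_closure hγ
  have hne : {n | ∃ l : List Γ, (∀ y ∈ l, y ∈ S ∨ y⁻¹ ∈ S) ∧ l.length = n ∧ l.prod = γ}.Nonempty :=
    ⟨l.length, l, fun y hy => (hl y hy).imp id Set.mem_inv.mp, rfl, hprod⟩
  exact Nat.sInf_mem hne

theorem exists_dist_smul_le_mul_wordLength {Γ X : Type*} [Group Γ] [PseudoMetricSpace X]
    [MulAction Γ X] [IsIsometricSMul Γ X] {S : Set Γ} (hSfin : S.Finite)
    (hSgen : Subgroup.closure S = ⊤) (x : X) :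
    ∃ M : ℝ, ∀ γ : Γ, dist x (γ • x) ≤ M * wordLength S γ := by
  obtain ⟨M, hM⟩ := (hSfin.image fun s => dist x (s • x)).bddAbove
  refine ⟨M, fun γ => ?_⟩
  obtain ⟨l, hl, hlen, rfl⟩ := exists_list_length_eq_wordLength hSgen γ
  rw [← hlen]
  exact dist_list_prod_smul_le x (fun s hs => hM ⟨s, hs, rfl⟩) hl

theorem exists_wordLength_le_mul_dist_smul_add {Γ X ι : Type*} [Group Γ] [PseudoMetricSpace X]
    [MulAction Γ X] [IsIsometricSMul Γ X] [Finite ι] [Nonempty ι] {S : Set Γ} {g : ι → Γ}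
    {A B α β : ℝ} (hA : 0 ≤ A) (hα : 0 < α)
    (hU : ∀ γ : Γ, (wordLength S γ : ℝ) ≤ A * (⨆ i, (transLength S (g i * γ) : ℝ)) + B)
    (hwd : ∀ (x : X) (γ : Γ), dist x (γ • x) ≥ α * (transLength S γ : ℝ) - β) (x : X) :
    ∃ E : ℝ, ∀ γ : Γ, (wordLength S γ : ℝ) ≤ A / α * dist x (γ • x) + E := by
  obtain ⟨K, hK⟩ := (Set.finite_range fun i => dist x (g i • x)).bddAbove
  refine ⟨A / α * (K + β) + B, fun γ => ?_⟩
  have hsup : (⨆ i, (transLength S (g i * γ) : ℝ)) ≤ (K + dist x (γ • x) + β) / α :=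
    ciSup_le fun i => by
      rw [le_div_iff₀ hα]
      linarith [hwd x (g i * γ), dist_mul_smul_le x (g i) γ, hK ⟨i, rfl⟩]
  calc (wordLength S γ : ℝ) ≤ A * (⨆ i, (transLength S (g i * γ) : ℝ)) + B := hU γ
    _ ≤ A * ((K + dist x (γ • x) + β) / α) + B := by gcongr
    _ = A / α * dist x (γ • x) + (A / α * (K + β) + B) := by ring

theorem exists_qi_bounds_of_le {Γ : Type*} {w d : Γ → ℝ} (hw : ∀ γ, 0 ≤ w γ) {M L E : ℝ}
    (hL : 0 < L) (hup : ∀ γ, d γ ≤ M * w γ) (hlow : ∀ γ, w γ ≤ L * d γ + E) :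
    ∃ C ≥ (1 : ℝ), ∃ D ≥ (0 : ℝ), ∀ γ, C⁻¹ * w γ - D ≤ d γ ∧ d γ ≤ C * w γ + D := by
  refine ⟨max 1 (max M L), le_max_left _ _, max 0 (E / L), le_max_left _ _, fun γ => ⟨?_, ?_⟩⟩
  · have hCL : (max 1 (max M L))⁻¹ ≤ L⁻¹ :=
      inv_anti₀ hL (le_max_of_le_right (le_max_right _ _))
    calc (max 1 (max M L))⁻¹ * w γ - max 0 (E / L) ≤ L⁻¹ * w γ - E / L := by
          gcongr
          · exact hw γ
          · exact le_max_right _ _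
      _ ≤ d γ := by
          rw [inv_mul_eq_div, ← sub_div, div_le_iff₀ hL]
          linarith [hlow γ]
  · calc d γ ≤ M * w γ := hup γ
      _ ≤ max 1 (max M L) * w γ + max 0 (E / L) := by
          have : M ≤ max 1 (max M L) := le_max_of_le_right (le_max_left _ _)
          nlinarith [hw γ, le_max_left 0 (E / L)]

theorem U_property_implies_orbit_qi_general {Γ : Type*} [Group Γ]
    (S : Set Γ) (hSfin : S.Finite) (hSgen : Subgroup.closure S = ⊤)
    -- the U-property
    (p : ℕ) (hp : 0 < p) (g : Fin p → Γ) (A B : ℝ) (hA : 0 < A)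
    (hU : ∀ γ : Γ, (wordLength S γ : ℝ)
      ≤ A * (⨆ i : Fin p, (transLength S (g i * γ) : ℝ)) + B)
    -- a well displacing isometric action
    {X : Type*} [MetricSpace X] [MulAction Γ X]
    (hiso : ∀ h : Γ, Isometry fun x : X => h • x)
    (α β : ℝ) (hα : 0 < α)
    (hwd : ∀ (x : X) (γ : Γ), dist x (γ • x) ≥ α * (transLength S γ : ℝ) - β) :
    ∀ x : X, ∃ C ≥ (1 : ℝ), ∃ D ≥ (0 : ℝ), ∀ γ : Γ,
      C⁻¹ * (wordLength S γ : ℝ) - D ≤ dist x (γ • x) ∧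
      dist x (γ • x) ≤ C * (wordLength S γ : ℝ) + D := by
  intro x
  have : IsIsometricSMul Γ X := ⟨hiso⟩
  have : Nonempty (Fin p) := Fin.pos_iff_nonempty.mp hp
  obtain ⟨M, hM⟩ := exists_dist_smul_le_mul_wordLength hSfin hSgen x
  obtain ⟨E, hE⟩ := exists_wordLength_le_mul_dist_smul_add hA.le hα hU hwd x
  exact exists_qi_bounds_of_le (fun γ => Nat.cast_nonneg _) (div_pos hA hα) hM hE

/-- If `Γ` has the U-property, then every well displacing isometric action of `Γ`
has orbit maps which are quasi-isometric embeddings. -/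
theorem U_property_implies_orbit_qi {Γ : Type*} [Group Γ]
    (S : Set Γ) (hSfin : S.Finite) (hSgen : Subgroup.closure S = ⊤)
    -- the U-property
    (p : ℕ) (hp : 0 < p) (g : Fin p → Γ) (A B : ℝ) (hA : 0 < A) (hB : 0 < B)
    (hU : ∀ γ : Γ, (wordLength S γ : ℝ)
      ≤ A * (⨆ i : Fin p, (transLength S (g i * γ) : ℝ)) + B)
    -- a well displacing isometric action
    {X : Type*} [MetricSpace X] [MulAction Γ X]
    (hiso : ∀ h : Γ, Isometry fun x : X => h • x)
    (α β : ℝ) (hα : 0 < α) (hβ : 0 < β)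
    (hwd : ∀ (x : X) (γ : Γ), dist x (γ • x) ≥ α * (transLength S γ : ℝ) - β) :
    ∀ x : X, ∃ C ≥ (1 : ℝ), ∃ D ≥ (0 : ℝ), ∀ γ : Γ,
      C⁻¹ * (wordLength S γ : ℝ) - D ≤ dist x (γ • x) ∧
      dist x (γ • x) ≤ C * (wordLength S γ : ℝ) + D :=
  U_property_implies_orbit_qi_general S hSfin hSgen p hp g A B hA hU hiso α β hα hwd
end

section
/- Let Γ be a finitely generated group and Γ₀ a normal subgroup of finite index. If Γ₀ has the U-property, then Γ has the U-property. -/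
section Lemmas
variable {G : Type*} [Group G] {S : Set G}

/-- `l` is a word over the alphabet `S ∪ S⁻¹`. -/
def IsWord (S : Set G) (l : List G) : Prop := ∀ x ∈ l, x ∈ S ∨ x⁻¹ ∈ S

lemma exists_word (hS : Subgroup.closure S = ⊤) (γ : G) :
    ∃ l : List G, IsWord S l ∧ l.prod = γ := by
  have hx : γ ∈ Subgroup.closure S := hS ▸ Subgroup.mem_top γ
  have h : γ ∈ Submonoid.closure (S ∪ S⁻¹) := by
    rw [← Subgroup.closure_toSubmonoid]; exact hx
  obtain ⟨l, hl, hp⟩ := Submonoid.exists_list_of_mem_closure h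
  exact ⟨l, fun y hy => by
    rcases hl y hy with h | h
    · exact Or.inl h
    · exact Or.inr (Set.mem_inv.mp h), hp⟩

lemma wordLength_le {l : List G} (hl : IsWord S l) : wordLength S l.prod ≤ l.length :=
  Nat.sInf_le ⟨l, hl, rfl, rfl⟩

lemma exists_word_length (hS : Subgroup.closure S = ⊤) (γ : G) :
    ∃ l : List G, IsWord S l ∧ l.length = wordLength S γ ∧ l.prod = γ := by
  have hne : {n | ∃ l : List G, (∀ x ∈ l, x ∈ S ∨ x⁻¹ ∈ S) ∧ l.length = n ∧ l.prod = γ}.Nonempty := by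
    obtain ⟨l, hl, hp⟩ := exists_word hS γ
    exact ⟨l.length, l, hl, rfl, hp⟩
  exact Nat.sInf_mem hne

lemma wordLength_mul_le (hS : Subgroup.closure S = ⊤) (x y : G) :
    wordLength S (x * y) ≤ wordLength S x + wordLength S y := by
  obtain ⟨l, hl, hll, hlp⟩ := exists_word_length hS x
  obtain ⟨m, hm, hml, hmp⟩ := exists_word_length hS y
  have : wordLength S ((l ++ m).prod) ≤ (l ++ m).length :=
    wordLength_le (fun z hz => by
      rcases List.mem_append.mp hz with h | h
      exacts [hl z h, hm z h])
  simpa [List.prod_append, hlp, hmp, hll, hml] using this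

lemma wordLength_inv_le (hS : Subgroup.closure S = ⊤) (x : G) :
    wordLength S x⁻¹ ≤ wordLength S x := by
  obtain ⟨l, hl, hll, hlp⟩ := exists_word_length hS x
  have h2 : IsWord S ((l.map (·⁻¹)).reverse) := by
    intro z hz
    simp only [List.mem_reverse, List.mem_map] at hz
    obtain ⟨w, hw, rfl⟩ := hz
    rcases hl w hw with h | h
    · exact Or.inr (by simpa using h)
    · exact Or.inl h
  have h3 := wordLength_le h2
  have hp : ((l.map (·⁻¹)).reverse).prod = x⁻¹ := by
    rw [← hlp, ← List.prod_inv_reverse]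
  rw [hp] at h3
  simpa [hll] using h3

lemma wordLength_prod_le (hS : Subgroup.closure S = ⊤) (l : List G) :
    wordLength S l.prod ≤ (l.map (wordLength S)).sum := by
  induction l with
  | nil => simpa using wordLength_le (S := S) (l := []) (by intro x hx; simp at hx)
  | cons a t ih =>
      simp only [List.prod_cons, List.map_cons, List.sum_cons]
      exact (wordLength_mul_le hS a t.prod).trans (by omega)

lemma ball_finite (hfin : S.Finite) (k : ℕ) :
    {x : G | ∃ l : List G, IsWord S l ∧ l.length ≤ k ∧ l.prod = x}.Finite := by
  induction k with
  | zero =>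
      apply Set.Finite.subset (Set.finite_singleton (1 : G))
      rintro x ⟨l, -, hlen, hprod⟩
      interval_cases h : l.length <;> simp_all [List.length_eq_zero_iff.mp h]
  | succ k ih =>
      apply Set.Finite.subset (ih.union (Set.Finite.image2 (· * ·) (hfin.union hfin.inv) ih))
      rintro x ⟨l, hw, hlen, hprod⟩
      match l with
      | [] => exact Or.inl ⟨[], hw, by simp, hprod⟩
      | a :: t =>
          refine Or.inr (Set.mem_image2.mpr ⟨a, ?_, t.prod, ⟨t, fun z hz => hw z (by simp [hz]),
            by simp at hlen; omega, rfl⟩, by simpa using hprod.symm ▸ rfl⟩)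
          rcases hw a (by simp) with h | h
          · exact Or.inl h
          · exact Or.inr (Set.mem_inv.mpr (by simpa using h))

lemma wordLength_ball_finite (hfin : S.Finite) (hS : Subgroup.closure S = ⊤) (k : ℕ) :
    {x : G | wordLength S x ≤ k}.Finite := by
  apply Set.Finite.subset (ball_finite hfin k)
  intro x hx
  obtain ⟨l, hl, hll, hlp⟩ := exists_word_length hS x
  exact ⟨l, hl, le_of_eq_of_le hll hx, hlp⟩

lemma transLength_le (η γ : G) : transLength S γ ≤ wordLength S (η * γ * η⁻¹) :=
  Nat.sInf_le ⟨η, rfl⟩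

lemma exists_transLength (γ : G) : ∃ η : G, wordLength S (η * γ * η⁻¹) = transLength S γ :=
  Nat.sInf_mem (⟨wordLength S (1 * γ * 1⁻¹), 1, rfl⟩ :
    {n | ∃ η : G, wordLength S (η * γ * η⁻¹) = n}.Nonempty)

end Lemmas
section Schreier
open scoped Classical
variable {Γ : Type*} [Group Γ] {S : Set Γ} (Γ₀ : Subgroup Γ)

/-- A coset representative: `1` on `Γ₀`, and `Quotient.out` otherwise. -/
noncomputable def rep' (x : Γ) : Γ :=
  if x ∈ Γ₀ then 1 else ((QuotientGroup.mk x : Γ ⧸ Γ₀)).out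

lemma rep'_mem (x : Γ) : (rep' Γ₀ x)⁻¹ * x ∈ Γ₀ := by
  unfold rep'
  split_ifs with h
  · simpa using h
  · rw [← QuotientGroup.eq, QuotientGroup.out_eq']

lemma schreier (hS : Subgroup.closure S = ⊤) {D : ℕ}
    (hrep : ∀ x : Γ, wordLength S (rep' Γ₀ x) ≤ D) :
    ∀ l : List Γ, IsWord S l →
      ∃ m : List Γ, (∀ t ∈ m, t ∈ Γ₀ ∧ wordLength S t ≤ 2 * D + 1) ∧
        m.length = l.length ∧ m.prod = (rep' Γ₀ l.prod)⁻¹ * l.prod := by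
  intro l
  induction l with
  | nil =>
      intro _
      refine ⟨[], by simp, rfl, ?_⟩
      simp [rep', Γ₀.one_mem]
  | cons a t ih =>
      intro hw
      obtain ⟨m, hm, hlen, hprod⟩ := ih (fun z hz => hw z (by simp [hz]))
      set u := t.prod with hu
      refine ⟨((rep' Γ₀ (a * u))⁻¹ * a * rep' Γ₀ u) :: m, ?_, by simp [hlen], ?_⟩
      · rintro x hx
        rcases List.mem_cons.mp hx with rfl | hx
        · constructor
          · have h1 := rep'_mem Γ₀ (a * u)
            have h2 := rep'_mem Γ₀ u
            have he : (rep' Γ₀ (a*u))⁻¹ * a * rep' Γ₀ u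
                = ((rep' Γ₀ (a*u))⁻¹ * (a*u)) * ((rep' Γ₀ u)⁻¹ * u)⁻¹ := by group
            rw [he]; exact Γ₀.mul_mem h1 (Γ₀.inv_mem h2)
          · have hs1 : wordLength S a ≤ 1 := by
              have hwrd : IsWord S [a] := by
                intro z hz; simp only [List.mem_singleton] at hz; rw [hz]
                exact hw a (by simp)
              simpa using wordLength_le hwrd
            have h1 : wordLength S ((rep' Γ₀ (a*u))⁻¹) ≤ D :=
              (wordLength_inv_le hS _).trans (hrep _)
            have h2 := hrep u
            have h3 := wordLength_mul_le hS ((rep' Γ₀ (a*u))⁻¹) a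
            have h4 := wordLength_mul_le hS ((rep' Γ₀ (a*u))⁻¹ * a) (rep' Γ₀ u)
            omega
        · exact hm x hx
      · rw [List.prod_cons, hprod, List.prod_cons, ← hu]
        group
end Schreier
/-- A group has the U-property (is undistorted in its conjugacy classes) if, for
any finite generating set, there are finitely many elements `g₁, …, g_p` and
constants `A, B > 0` with `‖γ‖ ≤ A · sup_i ℓ(g_i γ) + B` for all `γ`. -/
def HasUProperty (G : Type*) [Group G] : Prop :=
  ∀ S : Set G, S.Finite → Subgroup.closure S = ⊤ →
    ∃ (p : ℕ), 0 < p ∧ ∃ (g : Fin p → G) (A B : ℝ), 0 < A ∧ 0 < B ∧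
      ∀ γ : G, (wordLength S γ : ℝ)
        ≤ A * (⨆ i : Fin p, (transLength S (g i * γ) : ℝ)) + B

/-- If a normal subgroup of finite index of a finitely generated group `Γ` has the
U-property, then so does `Γ`. -/
theorem U_property_of_finite_index_normal {Γ : Type*} [Group Γ]
    (hfg : ∃ S : Set Γ, S.Finite ∧ Subgroup.closure S = ⊤)
    (Γ₀ : Subgroup Γ) [Γ₀.Normal] (hindex : Γ₀.FiniteIndex)
    (hU₀ : HasUProperty Γ₀) :
    HasUProperty Γ := by
  intro S hSfin hSgen
  haveI := hindex
  haveI : Fintype (Γ ⧸ Γ₀) := Fintype.ofFinite _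
  obtain ⟨D, hrep⟩ : ∃ D : ℕ, ∀ x : Γ, wordLength S (rep' Γ₀ x) ≤ D := by
    refine ⟨Finset.univ.sup (fun q : Γ ⧸ Γ₀ => wordLength S q.out), fun x => ?_⟩
    unfold rep'
    split_ifs with h
    · have hnil : IsWord S ([] : List Γ) := by intro z hz; simp at hz
      exact le_trans (by simpa using wordLength_le hnil) (Nat.zero_le _)
    · exact Finset.le_sup (f := fun q : Γ ⧸ Γ₀ => wordLength S q.out) (Finset.mem_univ _)
  -- the generating set of `Γ₀`
  set T₀ : Set Γ₀ := {t : Γ₀ | wordLength S (t : Γ) ≤ 2 * D + 1} with hT₀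
  have hT₀fin : T₀.Finite := by
    have : T₀ = (Subtype.val : Γ₀ → Γ) ⁻¹' {x : Γ | wordLength S x ≤ 2 * D + 1} := rfl
    rw [this]
    exact Set.Finite.preimage (Set.injOn_of_injective Subtype.val_injective)
      (wordLength_ball_finite hSfin hSgen _)
  -- Schreier rewriting
  have hword : ∀ γ₀ : Γ₀, ∃ m : List Γ₀, (∀ t ∈ m, t ∈ T₀) ∧
      m.length = wordLength S (γ₀ : Γ) ∧ m.prod = γ₀ := by
    intro γ₀
    obtain ⟨l, hl, hll, hlp⟩ := exists_word_length hSgen (γ₀ : Γ)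
    obtain ⟨m, hm, hmlen, hmprod⟩ := schreier Γ₀ hSgen hrep l hl
    have hmp : m.prod = (γ₀ : Γ) := by
      rw [hmprod, hlp]
      have : rep' Γ₀ (γ₀ : Γ) = 1 := by unfold rep'; exact if_pos γ₀.2
      rw [this]; group
    refine ⟨m.attach.map (fun t => (⟨t.1, (hm t.1 t.2).1⟩ : Γ₀)), ?_, ?_, ?_⟩
    · rintro t ht
      simp only [List.mem_map, List.mem_attach, true_and] at ht
      obtain ⟨w, rfl⟩ := ht
      exact (hm w.1 w.2).2
    · simpa using hmlen.trans hll
    · apply Subtype.ext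
      rw [← hmp]
      simp [SubmonoidClass.coe_list_prod, List.map_map, Function.comp_def]
  have hT₀gen : Subgroup.closure T₀ = (⊤ : Subgroup Γ₀) := by
    rw [Subgroup.eq_top_iff']
    intro γ₀
    obtain ⟨m, hmem, -, hmp⟩ := hword γ₀
    rw [← hmp]
    exact list_prod_mem (fun t ht => Subgroup.subset_closure (hmem t ht))
  have hup : ∀ γ₀ : Γ₀, wordLength T₀ γ₀ ≤ wordLength S (γ₀ : Γ) := by
    intro γ₀
    obtain ⟨m, hmem, hml, hmp⟩ := hword γ₀
    have : wordLength T₀ m.prod ≤ m.length :=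
      wordLength_le (fun t ht => Or.inl (hmem t ht))
    rw [hmp, hml] at this
    exact this
  have hdown : ∀ γ₀ : Γ₀, wordLength S (γ₀ : Γ) ≤ (2 * D + 1) * wordLength T₀ γ₀ := by
    intro γ₀
    obtain ⟨m, hm, hml, hmp⟩ := exists_word_length hT₀gen γ₀
    have hco : (γ₀ : Γ) = (m.map (Subtype.val)).prod := by
      rw [← hmp, ← SubmonoidClass.coe_list_prod]
    have h1 : wordLength S (γ₀ : Γ) ≤ ((m.map (Subtype.val)).map (wordLength S)).sum := by
      rw [hco]; exact wordLength_prod_le hSgen _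
    have h2 : ((m.map (Subtype.val)).map (wordLength S)).sum ≤
        (m.map (Subtype.val)).length * (2 * D + 1) := by
      rw [← List.length_map (f := wordLength S), ← smul_eq_mul]
      apply List.sum_le_card_nsmul
      intro x hx
      simp only [List.mem_map] at hx
      obtain ⟨t, ⟨t', ht', rfl⟩, rfl⟩ := hx
      rcases hm t' ht' with h | h
      · exact h
      · have := wordLength_inv_le hSgen ((t' : Γ)⁻¹)
        rw [inv_inv] at this
        exact this.trans h
    simp only [List.length_map] at h2
    calc wordLength S (γ₀ : Γ) ≤ m.length * (2 * D + 1) := h1.trans h2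
      _ = (2 * D + 1) * wordLength T₀ γ₀ := by rw [hml]; ring
  have htrans : ∀ δ : Γ₀, transLength T₀ δ ≤ transLength S (δ : Γ) + 2 * D := by
    intro δ
    obtain ⟨η, hη⟩ := exists_transLength (S := S) (δ : Γ)
    have ha : (rep' Γ₀ η)⁻¹ * η ∈ Γ₀ := rep'_mem Γ₀ η
    set a : Γ₀ := ⟨(rep' Γ₀ η)⁻¹ * η, ha⟩ with haa
    have hco : ((a * δ * a⁻¹ : Γ₀) : Γ)
        = (rep' Γ₀ η)⁻¹ * (η * (δ : Γ) * η⁻¹) * rep' Γ₀ η := by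
      push_cast [haa]
      group
    have h1 : transLength T₀ δ ≤ wordLength T₀ (a * δ * a⁻¹) := transLength_le a δ
    have h2 := hup (a * δ * a⁻¹)
    rw [hco] at h2
    have h3 := wordLength_mul_le hSgen ((rep' Γ₀ η)⁻¹ * (η * (δ : Γ) * η⁻¹)) (rep' Γ₀ η)
    have h4 := wordLength_mul_le hSgen ((rep' Γ₀ η)⁻¹) (η * (δ : Γ) * η⁻¹)
    have h5 : wordLength S ((rep' Γ₀ η)⁻¹) ≤ D := (wordLength_inv_le hSgen _).trans (hrep η)
    have h6 := hrep η
    rw [hη] at h4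
    omega
  -- apply the U-property of `Γ₀`
  obtain ⟨p, hp, g, A₀, B₀, hA₀, hB₀, hbound⟩ := hU₀ T₀ hT₀fin hT₀gen
  haveI : Nonempty (Fin p) := ⟨⟨0, hp⟩⟩
  set ι := Fin p × Option (Γ ⧸ Γ₀) with hι
  set e : Fin (Fintype.card ι) ≃ ι := (Fintype.equivFin ι).symm with he
  set orep : Option (Γ ⧸ Γ₀) → Γ := fun o => o.elim 1 Quotient.out with horep
  refine ⟨Fintype.card ι, Fintype.card_pos,
    fun j => ((g (e j).1 : Γ)) * (orep (e j).2)⁻¹,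
    (2 * (D : ℝ) + 1) * A₀, (D : ℝ) + (2 * (D : ℝ) + 1) * (A₀ * (2 * D) + B₀),
    by positivity, by positivity, ?_⟩
  intro γ
  set g' : Fin (Fintype.card ι) → Γ := fun j => ((g (e j).1 : Γ)) * (orep (e j).2)⁻¹ with hg'
  set r : Γ := rep' Γ₀ γ with hr
  have hγ₀mem : r⁻¹ * γ ∈ Γ₀ := rep'_mem Γ₀ γ
  set γ₀ : Γ₀ := ⟨r⁻¹ * γ, hγ₀mem⟩ with hγ₀
  obtain ⟨o, ho⟩ : ∃ o : Option (Γ ⧸ Γ₀), orep o = r := by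
    rw [hr]; unfold rep'
    split_ifs
    · exact ⟨none, rfl⟩
    · exact ⟨some _, rfl⟩
  set supJ : ℝ := ⨆ j, (transLength S (g' j * γ) : ℝ) with hsupJ
  have hbdd : BddAbove (Set.range fun j => (transLength S (g' j * γ) : ℝ)) :=
    (Set.finite_range _).bddAbove
  have hterm : ∀ i : Fin p, (transLength T₀ (g i * γ₀) : ℝ) ≤ supJ + 2 * D := by
    intro i
    have h1 : transLength T₀ (g i * γ₀) ≤ transLength S ((g i * γ₀ : Γ₀) : Γ) + 2 * D :=
      htrans _
    have h2 : ((g i * γ₀ : Γ₀) : Γ) = g' (e.symm (i, o)) * γ := by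
      rw [hg']
      simp only [Equiv.apply_symm_apply, ho, hγ₀]
      push_cast
      rw [mul_assoc]
    rw [h2] at h1
    have h3 : (transLength S (g' (e.symm (i, o)) * γ) : ℝ) ≤ supJ := le_ciSup hbdd _
    calc (transLength T₀ (g i * γ₀) : ℝ)
        ≤ (transLength S (g' (e.symm (i, o)) * γ) : ℝ) + 2 * D := by exact_mod_cast Nat.cast_le.mpr h1 |>.trans (by push_cast; linarith)
      _ ≤ supJ + 2 * D := by linarith
  have hsup0 : (⨆ i : Fin p, (transLength T₀ (g i * γ₀) : ℝ)) ≤ supJ + 2 * D :=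
    ciSup_le hterm
  have hb := hbound γ₀
  have c1 : wordLength S γ ≤ D + wordLength S ((γ₀ : Γ₀) : Γ) := by
    have hγeq : γ = r * (γ₀ : Γ) := by
      rw [hγ₀]; exact (mul_inv_cancel_left r γ).symm
    calc wordLength S γ = wordLength S (r * (γ₀ : Γ)) := by rw [← hγeq]
      _ ≤ wordLength S r + wordLength S (γ₀ : Γ) := wordLength_mul_le hSgen _ _
      _ ≤ D + wordLength S (γ₀ : Γ) := by have := hr ▸ hrep γ; omega
  have c2 := hdown γ₀
  have F1 : (wordLength S γ : ℝ) ≤ (D : ℝ) + (wordLength S ((γ₀ : Γ₀) : Γ) : ℝ) := by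
    exact_mod_cast Nat.cast_le.mpr c1 |>.trans (by push_cast; linarith)
  have F2 : (wordLength S ((γ₀ : Γ₀) : Γ) : ℝ) ≤ (2 * (D : ℝ) + 1) * (wordLength T₀ γ₀ : ℝ) := by
    exact_mod_cast Nat.cast_le.mpr c2 |>.trans (by push_cast; linarith)
  have F5 : (0 : ℝ) ≤ A₀ := le_of_lt hA₀
  have e1 : A₀ * (⨆ i : Fin p, (transLength T₀ (g i * γ₀) : ℝ)) ≤ A₀ * (supJ + 2 * D) :=
    mul_le_mul_of_nonneg_left hsup0 F5
  have e2 : (wordLength T₀ γ₀ : ℝ) ≤ A₀ * (supJ + 2 * D) + B₀ := by linarith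
  have e3 : (wordLength S ((γ₀ : Γ₀) : Γ) : ℝ)
      ≤ (2 * (D : ℝ) + 1) * (A₀ * (supJ + 2 * D) + B₀) :=
    F2.trans (mul_le_mul_of_nonneg_left e2 (by positivity))
  have hrw : ((2 * (D : ℝ) + 1) * A₀) * supJ + ((D : ℝ) + (2 * (D : ℝ) + 1) * (A₀ * (2 * D) + B₀))
      = (D : ℝ) + (2 * (D : ℝ) + 1) * (A₀ * (supJ + 2 * D) + B₀) := by ring
  show (wordLength S γ : ℝ) ≤ ((2 * (D : ℝ) + 1) * A₀) * supJ
      + ((D : ℝ) + (2 * (D : ℝ) + 1) * (A₀ * (2 * D) + B₀))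
  linarith
end

section
/- Every residually finite group Γ has infinite contortion, i.e., for every element γ ∈ Γ of infinite order, the set of conjugacy classes of the powers {γᵏ : k ≥ 1} is infinite. Equivalently: for every infinite-order γ and every finite family of conjugacy classes g₁,…,g_q, there exists k > 0 such that γᵏ ∉ g_i for all i. -/
private lemma aux_exists_quotient_many_divisors {Γ : Type*} [Group Γ]
    (hrf : ∀ h : Γ, h ≠ 1 → ∃ (H : Type) (_ : Group H) (_ : Finite H)
      (φ : Γ →* H), φ h ≠ 1) (γ : Γ) (hγ : ¬IsOfFinOrder γ) (j : ℕ) :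
    ∃ (H : Type) (_ : Group H) (_ : Finite H) (φ : Γ →* H),
      j ≤ (Nat.divisors (orderOf (φ γ))).card := by
  induction j with
  | zero => exact ⟨PUnit, inferInstance, inferInstance, 1, Nat.zero_le _⟩
  | succ j ih =>
    obtain ⟨K, _, _, ψ, hK⟩ := ih
    set n := orderOf (ψ γ) with hn_def
    have hn : 0 < n := orderOf_pos _
    have hpow : γ ^ n ≠ 1 := by
      intro h
      exact hγ (isOfFinOrder_iff_pow_eq_one.mpr ⟨n, by omega, h⟩)
    obtain ⟨H, _, _, φ, hφ⟩ := hrf (γ ^ n) hpow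
    refine ⟨K × H, inferInstance, inferInstance, ψ.prod φ, ?_⟩
    have horder : orderOf ((ψ.prod φ) γ) = Nat.lcm n (orderOf (φ γ)) :=
      Prod.orderOf _
    set m := orderOf (φ γ) with hm_def
    have hm : 0 < m := orderOf_pos _
    have hndvd : ¬ m ∣ n := by
      intro h
      exact hφ (by rw [map_pow]; exact orderOf_dvd_iff_pow_eq_one.mp h)
    set N := Nat.lcm n m with hN_def
    have hN : 0 < N := Nat.pos_of_ne_zero (Nat.lcm_ne_zero (by omega) (by omega))
    have hdvd : n ∣ N := Nat.dvd_lcm_left _ _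
    have hne : n ≠ N := by
      intro h
      exact hndvd (h ▸ Nat.dvd_lcm_right n m)
    have hss : n.divisors ⊂ N.divisors := by
      refine ⟨Nat.divisors_subset_of_dvd (by omega) hdvd, fun hsub => ?_⟩
      have : N ∣ n := (Nat.mem_divisors.mp (hsub (Nat.mem_divisors.mpr ⟨dvd_rfl, by omega⟩))).1
      exact hne (Nat.dvd_antisymm hdvd this)
    have := Finset.card_lt_card hss
    rw [horder]
    omega

/-- Every residually finite group has infinite contortion: for every
infinite-order element `γ`, the powers `γᵏ` (`k ≥ 1`) meet infinitely many
conjugacy classes. Equivalently, for every finite family of conjugacy classes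
there is a `k > 0` such that `γᵏ` belongs to none of them. -/
theorem residually_finite_infinite_contortion {Γ : Type*} [Group Γ]
    (hrf : ∀ h : Γ, h ≠ 1 → ∃ (H : Type) (_ : Group H) (_ : Finite H)
      (φ : Γ →* H), φ h ≠ 1) :
    ∀ γ : Γ, ¬IsOfFinOrder γ →
      {c : ConjClasses Γ | ∃ k : ℕ, 0 < k ∧ c = ConjClasses.mk (γ ^ k)}.Infinite := by
  intro γ hγ
  by_contra hinf
  rw [Set.not_infinite] at hinf
  obtain ⟨H, _, _, φ, hcard⟩ :=
    aux_exists_quotient_many_divisors hrf γ hγ (hinf.toFinset.card + 1)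
  set n := orderOf (φ γ) with hn_def
  have hn : 0 < n := orderOf_pos _
  have hle : n.divisors.card ≤ hinf.toFinset.card := by
    apply Finset.card_le_card_of_injOn (fun d => ConjClasses.mk (γ ^ d))
    · intro d hd
      rw [Finset.mem_coe, Set.Finite.mem_toFinset]
      exact ⟨d, Nat.pos_of_mem_divisors hd, rfl⟩
    · intro d₁ hd₁ d₂ hd₂ heq
      have hc : IsConj (γ ^ d₁) (γ ^ d₂) := ConjClasses.mk_eq_mk_iff_isConj.mp heq
      have hc' : IsConj (φ γ ^ d₁) (φ γ ^ d₂) := by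
        have := φ.map_isConj hc
        rwa [map_pow, map_pow] at this
      obtain ⟨c, hcsemi⟩ := hc'
      have horder : orderOf (φ γ ^ d₁) = orderOf (φ γ ^ d₂) := SemiconjBy.orderOf_eq _ hcsemi
      have h1 : d₁ ∣ n := (Nat.mem_divisors.mp hd₁).1
      have h2 : d₂ ∣ n := (Nat.mem_divisors.mp hd₂).1
      have e1 : orderOf (φ γ ^ d₁) = n / d₁ :=
        orderOf_pow_of_dvd (by have := Nat.pos_of_mem_divisors hd₁; omega) h1
      have e2 : orderOf (φ γ ^ d₂) = n / d₂ :=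
        orderOf_pow_of_dvd (by have := Nat.pos_of_mem_divisors hd₂; omega) h2
      have : n / d₁ = n / d₂ := by rw [← e1, ← e2, horder]
      rw [← Nat.div_div_self h1 (by omega), ← Nat.div_div_self h2 (by omega), this]
  omega
end

section
/- In SL(2, ℤ[1/p]), the element γ = [[1,1],[0,1]] is conjugate to γ^{pⁿ} for every n ≥ 0. Consequently SL(2, ℤ[1/p]) does not have the bounded depth roots property. -/
/-!
Conjugating `[[1, a], [0, 1]]` by `diag(u, u⁻¹)` gives `[[1, u² a], [0, 1]]`. Since `p` is a unit
in `ℤ[1/p]`, `γ` is conjugate to `γ ^ p ^ (2n)`, and `IsConj γ (γ ^ q)` makes `γ` a `q`-th power.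
So `γ`, which has infinite order, has roots of arbitrarily large order `p ^ (2n)`.
-/

/-- A group has the bounded depth roots property if every infinite-order element
has only roots of bounded order: for every infinite-order `γ` there is `p` such
that `η ^ q ≠ γ` whenever `q ≥ p`. -/
def BoundedDepthRoots (G : Type*) [Group G] : Prop :=
  ∀ γ : G, ¬IsOfFinOrder γ → ∃ p : ℕ, ∀ q : ℕ, p ≤ q → ∀ η : G, η ^ q ≠ γ

section Roots

variable {G : Type*} [Group G]

theorem exists_pow_eq_of_isConj_pow {γ : G} {q : ℕ} (h : IsConj γ (γ ^ q)) :
    ∃ η : G, η ^ q = γ := by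
  obtain ⟨c, hc⟩ := isConj_iff.mp h
  refine ⟨c⁻¹ * γ * c⁻¹⁻¹, ?_⟩
  rw [conj_pow, ← hc]
  group

theorem not_boundedDepthRoots_of_isConj_pow {γ : G} (hγ : ¬IsOfFinOrder γ)
    (hconj : ∀ N : ℕ, ∃ q ≥ N, IsConj γ (γ ^ q)) : ¬BoundedDepthRoots G := by
  intro hB
  obtain ⟨N, hN⟩ := hB γ hγ
  obtain ⟨q, hqN, hq⟩ := hconj N
  obtain ⟨η, hη⟩ := exists_pow_eq_of_isConj_pow hq
  exact hN q hqN η hη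

end Roots

namespace Matrix

theorem unipotent_fin_two_pow {R : Type*} [CommRing R] (a : R) (k : ℕ) :
    (!![1, a; 0, 1] : Matrix (Fin 2) (Fin 2) R) ^ k = !![1, k * a; 0, 1] := by
  induction k with
  | zero => simp [one_fin_two]
  | succ k ih =>
    rw [pow_succ, ih, mul_fin_two]
    simp [add_one_mul, add_comm]

end Matrix

namespace Matrix.SpecialLinearGroup

variable {R : Type*} [CommRing R]

theorem coe_pow_of_coe_eq_unipotent {γ : SpecialLinearGroup (Fin 2) R} {a : R}
    (hγ : (γ : Matrix (Fin 2) (Fin 2) R) = !![1, a; 0, 1]) (k : ℕ) :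
    ((γ ^ k : SpecialLinearGroup (Fin 2) R) : Matrix (Fin 2) (Fin 2) R) =
      !![1, k * a; 0, 1] := by
  rw [coe_pow, hγ, unipotent_fin_two_pow]

theorem not_isOfFinOrder_of_coe_eq_unipotent [CharZero R] {γ : SpecialLinearGroup (Fin 2) R}
    (hγ : (γ : Matrix (Fin 2) (Fin 2) R) = !![1, 1; 0, 1]) : ¬IsOfFinOrder γ := by
  refine not_isOfFinOrder_of_injective_pow fun k l hkl => ?_
  have h := congr_arg (fun g : SpecialLinearGroup (Fin 2) R => (g : Matrix (Fin 2) (Fin 2) R) 0 1)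
    hkl
  simpa [coe_pow_of_coe_eq_unipotent hγ] using h

theorem isConj_of_coe_eq_unipotent (u : Rˣ) {γ δ : SpecialLinearGroup (Fin 2) R} {a : R}
    (hγ : (γ : Matrix (Fin 2) (Fin 2) R) = !![1, a; 0, 1])
    (hδ : (δ : Matrix (Fin 2) (Fin 2) R) = !![1, u ^ 2 * a; 0, 1]) : IsConj γ δ := by
  let c : SpecialLinearGroup (Fin 2) R := ⟨!![(u : R), 0; 0, ↑u⁻¹], by simp [det_fin_two_of]⟩
  refine ⟨toUnits c, Subtype.ext ?_⟩
  change (c : Matrix (Fin 2) (Fin 2) R) * γ = δ * c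
  rw [hγ, hδ]
  simp only [c, mul_fin_two]
  simp [sq, mul_assoc, mul_comm a]

end Matrix.SpecialLinearGroup

theorem Localization.Away.charZero {R : Type*} [CommRing R] [IsDomain R] [CharZero R] {x : R}
    (hx : x ≠ 0) : CharZero (Localization.Away x) :=
  charZero_of_injective_algebraMap
    (IsLocalization.injective _ (powers_le_nonZeroDivisors_of_noZeroDivisors hx))

/-- In `SL(2, ℤ[1/p])`, the unipotent `γ = [[1,1],[0,1]]` is conjugate to
`γ ^ (p ^ (2n))` for every `n ≥ 0` (conjugation by `diag(pⁿ, p⁻ⁿ)`).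
Consequently `SL(2, ℤ[1/p])` does not have the bounded depth roots property. -/
theorem SL2_Zinv_p_conjugate_powers_and_no_bounded_depth_roots
    (p : ℕ) (hp : p.Prime)
    (γ : Matrix.SpecialLinearGroup (Fin 2) (Localization.Away (p : ℤ)))
    (hγ : (γ : Matrix (Fin 2) (Fin 2) (Localization.Away (p : ℤ)))
      = !![1, 1; 0, 1]) :
    (∀ n : ℕ, IsConj γ (γ ^ p ^ (2 * n))) ∧
      ¬BoundedDepthRoots
        (Matrix.SpecialLinearGroup (Fin 2) (Localization.Away (p : ℤ))) := by
  have : CharZero (Localization.Away (p : ℤ)) :=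
    Localization.Away.charZero (Int.natCast_ne_zero.mpr hp.ne_zero)
  let u := (IsLocalization.Away.algebraMap_isUnit (S := Localization.Away (p : ℤ)) (p : ℤ)).unit
  have hconj (n : ℕ) : IsConj γ (γ ^ p ^ (2 * n)) := by
    refine Matrix.SpecialLinearGroup.isConj_of_coe_eq_unipotent (u ^ n) hγ ?_
    rw [Matrix.SpecialLinearGroup.coe_pow_of_coe_eq_unipotent hγ]
    simp [u, pow_mul']
  refine ⟨hconj, not_boundedDepthRoots_of_isConj_pow
    (Matrix.SpecialLinearGroup.not_isOfFinOrder_of_coe_eq_unipotent hγ)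
      fun N => ⟨p ^ (2 * N), ?_, hconj N⟩⟩
  calc N ≤ p ^ N := (Nat.lt_pow_self hp.one_lt).le
    _ ≤ p ^ (2 * N) := Nat.pow_le_pow_right hp.pos (by omega)
end

section
/- If a group Γ is commensurable to a subgroup of a group G which has the bounded depth roots property, then Γ has the bounded depth roots property. In particular: (a) any subgroup of a group with bounded depth roots has bounded depth roots; (b) if H ≤ G has finite index k and H has bounded depth roots, then G has bounded depth roots (using that gᵏ ∈ H for every g ∈ G when H is normal of index k, or passing to the normal core). -/
/-- If `Γ` is commensurable to a subgroup of a group `G` with the bounded depth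
roots property (i.e. some finite-index subgroup of `Γ` is isomorphic to a
subgroup of `G`), then `Γ` has the bounded depth roots property. -/
theorem boundedDepthRoots_of_commensurable_subgroup
    {Γ G : Type*} [Group Γ] [Group G]
    (hG : BoundedDepthRoots G)
    (H : Subgroup Γ) (hH : H.FiniteIndex)
    (K : Subgroup G) (e : H ≃* K) :
    BoundedDepthRoots Γ := by
  haveI := hH
  intro γ hγ
  set N := H.normalCore.index with hNdef
  have hN : N ≠ 0 := Subgroup.FiniteIndex.index_ne_zero
  have hmemγ : γ ^ N ∈ H := H.normalCore_le (Subgroup.pow_index_mem H.normalCore γ)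
  have hγN : ¬ IsOfFinOrder ((e ⟨γ ^ N, hmemγ⟩ : K) : G) := by
    intro hf
    apply hγ
    rw [isOfFinOrder_iff_pow_eq_one] at hf ⊢
    obtain ⟨m, hm, h1⟩ := hf
    refine ⟨N * m, Nat.mul_pos (Nat.pos_of_ne_zero hN) hm, ?_⟩
    have h2 : (e ⟨γ ^ N, hmemγ⟩) ^ m = 1 := by
      apply Subtype.ext
      simpa using h1
    have h3 : (⟨γ ^ N, hmemγ⟩ : H) ^ m = 1 := by
      apply e.injective; rw [map_pow, h2, map_one]
    have h4 := congrArg (Subtype.val) h3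
    simpa [pow_mul] using h4
  obtain ⟨p, hp⟩ := hG _ hγN
  refine ⟨p, fun q hq η hηq => ?_⟩
  have hmemη : η ^ N ∈ H := H.normalCore_le (Subgroup.pow_index_mem H.normalCore η)
  have hsub : (⟨η ^ N, hmemη⟩ : H) ^ q = ⟨γ ^ N, hmemγ⟩ := by
    apply Subtype.ext
    rw [SubmonoidClass.coe_pow]
    simp only
    rw [← pow_mul, mul_comm, pow_mul, hηq]
  apply hp q hq ((e ⟨η ^ N, hmemη⟩ : K) : G)
  rw [← SubmonoidClass.coe_pow, ← map_pow, hsub]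
end

section
/- The group SL(n, ℤ) has the bounded depth roots property: for every infinite-order matrix A ∈ SL(n, ℤ) there is an integer p such that no B ∈ SL(n, ℤ) satisfies Bᵏ = A with k ≥ p. -/
/-!
If `B ^ k = A`, every complex eigenvalue of `B` is a `k`-th root of an eigenvalue of `A`, so it has
modulus at most `R = max 1 ρ(A)`. The characteristic polynomial of `B` then has integer coefficients
bounded in terms of `R` and `n`, so the eigenvalues of all such `B` lie in one finite set.

If `A` has an eigenvalue `λ` with `|λ| > 1`, then `λ = μ ^ k` for an eigenvalue `μ` of `B` with
`|μ| > 1`, taken from that finite set, and `|μ| ^ k ≤ R` bounds `k`. Otherwise the eigenvalues of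
`B` and of all its powers lie in the closed unit disc, hence in a finite set, so they are roots of
unity of bounded order and `B ^ N` is unipotent for some `N` depending only on `n`. Writing
`B ^ N = 1 + Y` with `Y ^ (t + 1) = 0 ≠ Y ^ t`, where `t < n`, and `t ≥ 1` because `A ^ N ≠ 1`,
one gets `(A ^ N - 1) ^ t = k ^ t Y ^ t`. As `Y ^ t` is a nonzero integer matrix, `k ≤ k ^ t` is
at most the largest entry of the matrices `(A ^ N - 1) ^ t`, `t < n`.
-/

open Polynomial

theorem bddAbove_setOf_pow_le {x : ℝ} (hx : 1 < x) (R : ℝ) :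
    BddAbove {k : ℕ | x ^ k ≤ R} := by
  obtain ⟨K, hK⟩ := pow_unbounded_of_one_lt R hx
  refine ⟨K, fun k hk => ?_⟩
  by_contra! hKk
  exact (hK.trans_le (pow_le_pow_right₀ hx.le hKk.le)).not_ge hk

theorem X_pow_succ_dvd_X_add_one_pow_sub_one_pow_sub (k t : ℕ) :
    (X : ℤ[X]) ^ (t + 1) ∣ ((X + 1) ^ k - 1) ^ t - ((k : ℤ[X]) * X) ^ t := by
  set g : ℤ[X] := ∑ i ∈ Finset.range k, (X + 1) ^ i
  have hg : (X + 1) ^ k - 1 = X * g := by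
    rw [← geom_sum_mul, add_sub_cancel_right, mul_comm]
  have hg0 : g.coeff 0 = k := by simp [g, coeff_zero_eq_eval_zero, eval_finsetSum]
  have hXg : X ∣ g - (k : ℤ[X]) := by simpa [hg0] using X_dvd_sub_C (p := g)
  rw [hg, mul_pow, mul_pow, mul_comm _ (X ^ t), ← mul_sub, pow_succ]
  exact mul_dvd_mul_left _ (hXg.trans (sub_dvd_pow_sub_pow _ _ t))

theorem pow_sub_one_pow_eq_of_sub_one_pow_succ_eq_zero {R : Type*} [Ring R] {V : R} {t : ℕ}
    (hV : (V - 1) ^ (t + 1) = 0) (k : ℕ) : (V ^ k - 1) ^ t = (k : R) ^ t * (V - 1) ^ t := by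
  obtain ⟨q, hq⟩ := X_pow_succ_dvd_X_add_one_pow_sub_one_pow_sub k t
  have h := congrArg (aeval (V - 1)) hq
  simp only [map_sub, map_pow, map_mul, map_add, map_one, aeval_X, map_natCast,
    sub_add_cancel, hV, zero_mul] at h
  rw [← (Nat.cast_commute k (V - 1)).mul_pow, ← sub_eq_zero, h]

namespace Matrix

variable {ι : Type*} [Fintype ι] [DecidableEq ι]

def complexSpectrum (M : Matrix ι ι ℤ) : Set ℂ :=
  spectrum ℂ (M.map (Int.castRingHom ℂ))

theorem mem_complexSpectrum_iff {M : Matrix ι ι ℤ} {z : ℂ} :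
    z ∈ M.complexSpectrum ↔ z ∈ (M.charpoly.map (Int.castRingHom ℂ)).roots := by
  rw [complexSpectrum, mem_spectrum_iff_isRoot_charpoly,
    mem_roots ((M.charpoly_monic.map _).ne_zero), ← charpoly_map]

theorem finite_complexSpectrum (M : Matrix ι ι ℤ) : M.complexSpectrum.Finite :=
  (Multiset.toFinset _).finite_toSet.subset fun _ hz =>
    Multiset.mem_toFinset.2 (mem_complexSpectrum_iff.1 hz)

theorem complexSpectrum_pow (M : Matrix ι ι ℤ) {k : ℕ} (hk : 0 < k) :
    (M ^ k).complexSpectrum = (· ^ k) '' M.complexSpectrum := by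
  rw [complexSpectrum, complexSpectrum, Matrix.map_pow, spectrum.map_pow_of_pos _ hk]

variable (ι) in
theorem finite_setOf_mem_complexSpectrum_of_norm_le (R : ℝ) :
    {z | ∃ M : Matrix ι ι ℤ, (∀ w ∈ M.complexSpectrum, ‖w‖ ≤ R) ∧
      z ∈ M.complexSpectrum}.Finite := by
  classical
  set d := Fintype.card ι
  set C : ℤ := ⌈max R 1 ^ d * d.choose (d / 2)⌉
  refine (bUnion_roots_finite (Int.castRingHom ℂ) d (Set.finite_Icc (-C) C)).subset ?_
  rintro z ⟨M, hM, hz⟩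
  simp only [Set.mem_iUnion]
  refine ⟨M.charpoly, ⟨M.charpoly_natDegree_eq_dim.le, fun i => ?_⟩, ?_⟩
  · have hcoeff := coeff_bdd_of_roots_le _ M.charpoly_monic (IsAlgClosed.splits _)
      M.charpoly_natDegree_eq_dim.le (fun w hw => hM w (mem_complexSpectrum_iff.2 hw)) i
    rw [coeff_map, eq_intCast, Complex.norm_intCast] at hcoeff
    rw [Set.mem_Icc, ← abs_le]
    exact_mod_cast hcoeff.trans (Int.le_ceil _)
  · simpa using mem_complexSpectrum_iff.1 hz

theorem norm_le_of_mem_complexSpectrum_of_pow_eq {A B : Matrix ι ι ℤ} {k : ℕ} (hk : 0 < k)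
    (hBA : B ^ k = A) {R : ℝ} (hR : 1 ≤ R) (hA : ∀ w ∈ A.complexSpectrum, ‖w‖ ≤ R) {z : ℂ}
    (hz : z ∈ B.complexSpectrum) : ‖z‖ ≤ R := by
  have hzk : ‖z‖ ^ k ≤ R := by
    rw [← norm_pow]
    apply hA
    rw [← hBA, complexSpectrum_pow _ hk]
    exact ⟨z, hz, rfl⟩
  rcases le_or_gt ‖z‖ 1 with h | h
  · linarith
  · exact (le_self_pow₀ h.le hk.ne').trans hzk

theorem isOfFinOrder_of_mem_complexSpectrum {M : Matrix ι ι ℤ} (hM : IsUnit M)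
    (h : ∀ w ∈ M.complexSpectrum, ‖w‖ ≤ 1) {z : ℂ} (hz : z ∈ M.complexSpectrum) :
    IsOfFinOrder z := by
  have hz0 : z ≠ 0 := by
    rintro rfl
    exact (spectrum.zero_mem_iff ℂ).1 hz (hM.map (Int.castRingHom ℂ).mapMatrix)
  have hpow (j : ℕ) : z ^ (j + 1) ∈
      {z | ∃ M : Matrix ι ι ℤ, (∀ w ∈ M.complexSpectrum, ‖w‖ ≤ 1) ∧ z ∈ M.complexSpectrum} := by
    refine ⟨M ^ (j + 1), ?_, by rw [complexSpectrum_pow _ j.succ_pos]; exact ⟨z, hz, rfl⟩⟩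
    rw [complexSpectrum_pow _ j.succ_pos]
    rintro _ ⟨w, hw, rfl⟩
    rw [norm_pow]
    exact pow_le_one₀ (norm_nonneg w) (h w hw)
  obtain ⟨i, j, hij, heq⟩ :=
    (finite_setOf_mem_complexSpectrum_of_norm_le ι 1).exists_lt_map_eq_of_forall_mem hpow
  refine isOfFinOrder_iff_pow_eq_one.2 ⟨j - i, by omega, ?_⟩
  apply mul_left_cancel₀ (pow_ne_zero (i + 1) hz0)
  rw [← pow_add, mul_one, heq]
  congr 1
  omega

theorem sub_one_pow_card_eq_zero_of_spectrum_subset {K : Type*} [Field K] [IsAlgClosed K]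
    {M : Matrix ι ι K} (h : spectrum K M ⊆ {1}) : (M - 1) ^ Fintype.card ι = 0 := by
  have hroots : M.charpoly.roots = Multiset.replicate (Fintype.card ι) 1 := by
    refine Multiset.eq_replicate.2 ⟨?_, fun z hz => h ?_⟩
    · rw [← (IsAlgClosed.splits M.charpoly).natDegree_eq_card_roots, charpoly_natDegree_eq_dim]
    · exact mem_spectrum_iff_isRoot_charpoly.2 (isRoot_of_mem_roots hz)
  have hchar : M.charpoly = (X - C 1) ^ Fintype.card ι := by
    rw [(IsAlgClosed.splits M.charpoly).eq_prod_roots_of_monic M.charpoly_monic, hroots,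
      Multiset.map_replicate, Multiset.prod_replicate]
  simpa [hchar] using M.aeval_self_charpoly

variable (ι) in
theorem exists_pow_sub_one_pow_card_eq_zero : ∃ N > 0, ∀ M : Matrix ι ι ℤ, IsUnit M →
    (∀ w ∈ M.complexSpectrum, ‖w‖ ≤ 1) → (M ^ N - 1) ^ Fintype.card ι = 0 := by
  set S := {z | ∃ M : Matrix ι ι ℤ, IsUnit M ∧ (∀ w ∈ M.complexSpectrum, ‖w‖ ≤ 1) ∧
    z ∈ M.complexSpectrum}
  have hS : S.Finite := (finite_setOf_mem_complexSpectrum_of_norm_le ι 1).subset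
    fun z ⟨M, _, hM, hz⟩ => ⟨M, hM, hz⟩
  have hfin (z) (hz : z ∈ S) : IsOfFinOrder z := by
    obtain ⟨M, hMu, hM, hz⟩ := hz
    exact isOfFinOrder_of_mem_complexSpectrum hMu hM hz
  set N := ∏ z ∈ hS.toFinset, orderOf z
  have hN : 0 < N := Finset.prod_pos fun z hz => (hfin z (hS.mem_toFinset.1 hz)).orderOf_pos
  refine ⟨N, hN, fun M hMu hM => ?_⟩
  have hspec : spectrum ℂ ((M ^ N).map (Int.castRingHom ℂ)) ⊆ {1} := by
    change (M ^ _).complexSpectrum ⊆ _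
    rw [complexSpectrum_pow _ hN]
    rintro _ ⟨z, hz, rfl⟩
    exact orderOf_dvd_iff_pow_eq_one.1
      (Finset.dvd_prod_of_mem _ (hS.mem_toFinset.2 ⟨M, hMu, hM, hz⟩))
  have h := sub_one_pow_card_eq_zero_of_spectrum_subset hspec
  rw [← RingHom.mapMatrix_apply, ← map_one (Int.castRingHom ℂ).mapMatrix, ← map_sub, ← map_pow,
    ← map_zero (Int.castRingHom ℂ).mapMatrix] at h
  exact map_injective (f := Int.castRingHom ℂ) Int.cast_injective h

theorem bddAbove_setOf_unipotent_pow_eq {U : Matrix ι ι ℤ} (hU : U ≠ 1) :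
    BddAbove {k | ∃ V : Matrix ι ι ℤ, (V - 1) ^ Fintype.card ι = 0 ∧ V ^ k = U} := by
  refine ⟨∑ t ∈ Finset.range (Fintype.card ι), ∑ i, ∑ j, (((U - 1) ^ t) i j).natAbs, ?_⟩
  rintro k ⟨V, hV, rfl⟩
  have : Nontrivial (Matrix ι ι ℤ) := nontrivial_of_ne _ _ hU
  obtain ⟨t, ht⟩ := Nat.exists_eq_add_one_of_ne_zero (pos_nilpotencyClass_iff.2 ⟨_, hV⟩).ne'
  obtain ⟨hVt, hVt0⟩ := nilpotencyClass_eq_succ_iff.1 ht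
  have htcard : t < Fintype.card ι := by
    have : nilpotencyClass (V - 1) ≤ Fintype.card ι := Nat.sInf_le hV
    omega
  have ht0 : t ≠ 0 := by
    rintro rfl
    rw [zero_add, pow_one, sub_eq_zero] at hVt
    exact hU (by rw [hVt, one_pow])
  obtain ⟨i, j, hij⟩ : ∃ i j, ((V - 1) ^ t) i j ≠ 0 := by
    by_contra! h
    exact hVt0 (ext h)
  have hentry : ((V ^ k - 1) ^ t) i j = k ^ t * ((V - 1) ^ t) i j := by
    rw [pow_sub_one_pow_eq_of_sub_one_pow_succ_eq_zero hVt, ← Nat.cast_pow, ← nsmul_eq_mul,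
      smul_apply, nsmul_eq_mul, Nat.cast_pow]
  calc k ≤ k ^ t := Nat.le_self_pow ht0 k
    _ ≤ (((V ^ k - 1) ^ t) i j).natAbs := by
      rw [hentry, Int.natAbs_mul, Int.natAbs_pow, Int.natAbs_natCast]
      exact Nat.le_mul_of_pos_right _ (Int.natAbs_pos.2 hij)
    _ ≤ ∑ j', (((V ^ k - 1) ^ t) i j').natAbs :=
      Finset.single_le_sum (f := fun j' => (((V ^ k - 1) ^ t) i j').natAbs)
        (fun _ _ => Nat.zero_le _) (Finset.mem_univ j)
    _ ≤ ∑ i', ∑ j', (((V ^ k - 1) ^ t) i' j').natAbs :=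
      Finset.single_le_sum (f := fun i' => ∑ j', (((V ^ k - 1) ^ t) i' j').natAbs)
        (fun _ _ => Nat.zero_le _) (Finset.mem_univ i)
    _ ≤ _ :=
      Finset.single_le_sum (f := fun t => ∑ i', ∑ j', (((V ^ k - 1) ^ t) i' j').natAbs)
        (fun _ _ => Nat.zero_le _) (Finset.mem_range.2 htcard)

theorem bddAbove_setOf_pow_eq_of_norm_le_one {A : Matrix ι ι ℤ} (hA : ¬IsOfFinOrder A)
    (hA1 : ∀ w ∈ A.complexSpectrum, ‖w‖ ≤ 1) :
    BddAbove {k | ∃ B : Matrix ι ι ℤ, IsUnit B ∧ B ^ k = A} := by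
  obtain ⟨N, hN, hunip⟩ := exists_pow_sub_one_pow_card_eq_zero ι
  have hAN : A ^ N ≠ 1 := fun h => hA (isOfFinOrder_iff_pow_eq_one.2 ⟨N, hN, h⟩)
  refine ((bddAbove_setOf_unipotent_pow_eq hAN).insert 0).mono ?_
  rintro k ⟨B, hB, rfl⟩
  rcases k.eq_zero_or_pos with rfl | hk
  · exact Set.mem_insert 0 _
  refine Set.mem_insert_of_mem 0 ⟨B ^ N, hunip B hB fun z hz => ?_, ?_⟩
  · exact norm_le_of_mem_complexSpectrum_of_pow_eq hk rfl le_rfl hA1 hz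
  · rw [← pow_mul, mul_comm, pow_mul]

theorem bddAbove_setOf_pow_eq_of_one_lt_norm {A : Matrix ι ι ℤ} {l : ℂ}
    (hl : l ∈ A.complexSpectrum) (hl1 : 1 < ‖l‖) :
    BddAbove {k | ∃ B : Matrix ι ι ℤ, B ^ k = A} := by
  obtain ⟨R, hR⟩ := (A.finite_complexSpectrum.image norm).bddAbove
  set S := {z | ∃ M : Matrix ι ι ℤ, (∀ w ∈ M.complexSpectrum, ‖w‖ ≤ max R 1) ∧
    z ∈ M.complexSpectrum}
  have hS : {z ∈ S | 1 < ‖z‖}.Finite :=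
    (finite_setOf_mem_complexSpectrum_of_norm_le ι _).subset (Set.sep_subset _ _)
  refine ((hS.bddAbove_biUnion.2 fun z hz => bddAbove_setOf_pow_le hz.2 (max R 1)).insert 0).mono
    ?_
  rintro k ⟨B, rfl⟩
  rcases k.eq_zero_or_pos with rfl | hk
  · exact Set.mem_insert 0 _
  have hAR : ∀ w ∈ (B ^ k).complexSpectrum, ‖w‖ ≤ max R 1 := fun w hw =>
    (hR ⟨w, hw, rfl⟩).trans (le_max_left R 1)
  have hlR := hAR l hl
  rw [complexSpectrum_pow _ hk] at hl
  obtain ⟨z, hz, rfl⟩ := hl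
  rw [norm_pow] at hl1 hlR
  have hz1 : 1 < ‖z‖ := by
    by_contra! h
    exact hl1.not_ge (pow_le_one₀ (norm_nonneg z) h)
  have hBR : ∀ w ∈ B.complexSpectrum, ‖w‖ ≤ max R 1 := fun w hw =>
    norm_le_of_mem_complexSpectrum_of_pow_eq hk rfl (le_max_right R 1) hAR hw
  exact Set.mem_insert_of_mem 0 (Set.mem_biUnion ⟨⟨B, hBR, hz⟩, hz1⟩ hlR)

theorem bddAbove_setOf_pow_eq {A : Matrix ι ι ℤ} (hA : ¬IsOfFinOrder A) :
    BddAbove {k | ∃ B : Matrix ι ι ℤ, IsUnit B ∧ B ^ k = A} := by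
  by_cases h : ∃ l ∈ A.complexSpectrum, 1 < ‖l‖
  · obtain ⟨l, hl, hl1⟩ := h
    refine (bddAbove_setOf_pow_eq_of_one_lt_norm hl hl1).mono ?_
    rintro k ⟨B, -, hB⟩
    exact ⟨B, hB⟩
  · exact bddAbove_setOf_pow_eq_of_norm_le_one hA fun w hw => not_lt.1 fun h' => h ⟨w, hw, h'⟩

end Matrix

/-- `SL(n, ℤ)` has the bounded depth roots property: for every infinite-order
`A ∈ SL(n, ℤ)` there is an integer `p` such that no `B ∈ SL(n, ℤ)` satisfies
`Bᵏ = A` with `k ≥ p`. -/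
theorem SL_n_Z_bounded_depth_roots (n : ℕ)
    (A : Matrix.SpecialLinearGroup (Fin n) ℤ) (hA : ¬IsOfFinOrder A) :
    ∃ p : ℕ, ∀ k : ℕ, p ≤ k →
      ∀ B : Matrix.SpecialLinearGroup (Fin n) ℤ, B ^ k ≠ A := by
  open Matrix.SpecialLinearGroup in
  obtain ⟨p, hp⟩ := Matrix.bddAbove_setOf_pow_eq (A := coeMonoidHom A)
    (coeMonoidHom_injective.isOfFinOrder_iff.not.2 hA)
  refine ⟨p + 1, fun k hk B hB => ?_⟩
  have : k ≤ p := hp ⟨coeMonoidHom B, (Group.isUnit B).map coeMonoidHom, by rw [← map_pow, hB]⟩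
  omega
end

section
/- Let Γ be a δ-hyperbolic group (with respect to a finite generating set, using the Gromov product ⟨g,h⟩ = (‖g‖ + ‖h‖ − d(g,h))/2 based at the identity). If g ∈ Γ is almost cyclically reduced, i.e., ⟨g, g⁻¹⟩ ≤ ‖g‖/3 − δ, then the stable translation length satisfies [g]_∞ = lim_{n→∞} ‖gⁿ‖/n ≥ ‖g‖/3; equivalently ‖gⁿ‖ ≥ n‖g‖/3 for all n ≥ 0. -/
/-- The Gromov product `⟨g,h⟩ = (‖g‖ + ‖h‖ − d(g,h))/2` based at the identity,
for the word metric `d(g,h) = ‖g⁻¹h‖`. -/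
noncomputable def gromovProd {Γ : Type*} [Group Γ] (S : Set Γ) (g h : Γ) : ℝ :=
  ((wordLength S g : ℝ) + (wordLength S h : ℝ) - (wordLength S (g⁻¹ * h) : ℝ)) / 2

lemma wordLength_aux_inv {Γ : Type*} [Group Γ] (S : Set Γ) (γ : Γ) (n : ℕ)
    (h : ∃ l : List Γ, (∀ x ∈ l, x ∈ S ∨ x⁻¹ ∈ S) ∧ l.length = n ∧ l.prod = γ) :
    ∃ l : List Γ, (∀ x ∈ l, x ∈ S ∨ x⁻¹ ∈ S) ∧ l.length = n ∧ l.prod = γ⁻¹ := by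
  obtain ⟨l, hl, hlen, hprod⟩ := h
  refine ⟨(l.map fun x => x⁻¹).reverse, ?_, ?_, ?_⟩
  · intro x hx
    simp only [List.mem_reverse, List.mem_map] at hx
    obtain ⟨y, hy, rfl⟩ := hx
    rcases hl y hy with h | h
    · exact Or.inr (by simpa using h)
    · exact Or.inl h
  · simp [hlen]
  · rw [← hprod]
    exact (List.prod_inv_reverse l).symm

lemma wordLength_inv {Γ : Type*} [Group Γ] (S : Set Γ) (γ : Γ) :
    wordLength S γ⁻¹ = wordLength S γ := by
  unfold wordLength
  congr 1
  ext n
  constructor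
  · intro h
    simpa using wordLength_aux_inv S γ⁻¹ n h
  · intro h
    exact wordLength_aux_inv S γ n h

lemma wordLength_one {Γ : Type*} [Group Γ] (S : Set Γ) : wordLength S (1 : Γ) = 0 := by
  have : (0 : ℕ) ∈ {n | ∃ l : List Γ, (∀ x ∈ l, x ∈ S ∨ x⁻¹ ∈ S) ∧ l.length = n ∧ l.prod = 1} :=
    ⟨[], by simp, rfl, rfl⟩
  exact Nat.sInf_eq_zero.mpr (Or.inl this)

/-- In a `δ`-hyperbolic group, if `g` is almost cyclically reduced, i.e.
`⟨g, g⁻¹⟩ ≤ ‖g‖/3 − δ`, then `‖gⁿ‖ ≥ n‖g‖/3` for all `n`; in particular the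
stable translation length is at least `‖g‖/3`. -/
theorem norm_pow_ge_of_almost_cyclically_reduced
    {Γ : Type*} [Group Γ] (S : Set Γ) (hSfin : S.Finite)
    (hSgen : Subgroup.closure S = ⊤)
    (δ : ℝ) (hδ : 0 ≤ δ)
    (hhyp : ∀ g h k : Γ,
      gromovProd S g k ≥ min (gromovProd S g h) (gromovProd S h k) - δ)
    (g : Γ)
    (hacr : gromovProd S g g⁻¹ ≤ (wordLength S g : ℝ) / 3 - δ) :
    ∀ n : ℕ, (wordLength S (g ^ n) : ℝ) ≥ n * (wordLength S g : ℝ) / 3 := by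
  by_cases h0 : wordLength S g = 0
  · intro n
    rw [h0]
    simp
  have hpos : (0 : ℝ) < (wordLength S g : ℝ) := by
    exact_mod_cast Nat.pos_of_ne_zero h0
  -- rewrite hacr in terms of ‖g²‖
  have e0 : g⁻¹ * g⁻¹ = (g ^ 2)⁻¹ := by rw [sq, mul_inv_rev]
  have hacr' : ((wordLength S g : ℝ) + (wordLength S g : ℝ) - (wordLength S (g ^ 2) : ℝ)) / 2
      ≤ (wordLength S g : ℝ) / 3 - δ := by
    have := hacr
    unfold gromovProd at this
    rw [e0, wordLength_inv, wordLength_inv] at this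
    exact this
  have key : ∀ m : ℕ, (wordLength S (g ^ (m + 1)) : ℝ)
      ≥ (wordLength S (g ^ m) : ℝ) + (wordLength S g : ℝ) / 3 := by
    intro m
    induction m with
    | zero =>
      simp [wordLength_one]
      linarith
    | succ k ih =>
      have h1 := hhyp g⁻¹ ((g ^ (k + 1))⁻¹) g
      unfold gromovProd at h1
      have e1 : g⁻¹⁻¹ * g = g ^ 2 := by rw [inv_inv, sq]
      have e2 : g⁻¹⁻¹ * (g ^ (k + 1))⁻¹ = (g ^ k)⁻¹ := by group
      have e3 : ((g ^ (k + 1))⁻¹)⁻¹ * g = g ^ (k + 2) := by group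
      rw [e1, e2, e3, wordLength_inv, wordLength_inv, wordLength_inv] at h1
      set x1 : ℝ := (wordLength S g : ℝ)
      set xk : ℝ := (wordLength S (g ^ k) : ℝ)
      set xk1 : ℝ := (wordLength S (g ^ (k + 1)) : ℝ)
      set xk2 : ℝ := (wordLength S (g ^ (k + 2)) : ℝ)
      set x2 : ℝ := (wordLength S (g ^ 2) : ℝ)
      have hmin : min ((x1 + xk1 - xk) / 2) ((xk1 + x1 - xk2) / 2) ≤ x1 / 3 := by
        linarith [h1, hacr']
      have hA : (x1 + xk1 - xk) / 2 > x1 / 3 := by linarith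
      have hB : (xk1 + x1 - xk2) / 2 ≤ x1 / 3 := by
        rcases min_le_iff.mp hmin with h | h
        · linarith
        · exact h
      linarith
  intro n
  induction n with
  | zero =>
    simp [wordLength_one]
  | succ n ih =>
    have := key n
    push_cast
    push_cast at ih
    linarith
end

section
/- Let Γ be a finitely generated free group with free basis S = {u, v, w₁,…,w_n} (n ≥ 0), with word length ‖·‖ relative to S and stable length [g]_∞ = lim ‖gᵏ‖/k. For every g ∈ Γ, at least one of the elements g, gu, gv is cyclically reduced, and hence max([g]_∞, [gu]_∞, [gv]_∞) ≥ ‖g‖ − 1. In particular ‖g‖ ≤ max(ℓ(g), ℓ(gu), ℓ(gv)) + 1, so free groups have the U-property. -/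
/-!
If the reduced word of `g` starts with a letter `x` and ends with `x⁻¹`, then appending whichever
of `u`, `v` differs from `x` produces no cancellation at either junction, so `g u` or `g v` is
cyclically reduced, of length `‖g‖ + 1`. For a cyclically reduced `h` the reduced
word of `hᵏ` is the `k`-fold concatenation of that of `h`, so `‖hᵏ‖ = k ‖h‖`. This gives
`[h]_∞ = ‖h‖` directly, and, since `hᵏ = η⁻¹ (η h η⁻¹)ᵏ η`, also
`k ‖h‖ ≤ k ‖η h η⁻¹‖ + 2 ‖η‖` for all `k`, whence `‖h‖ ≤ ‖η h η⁻¹‖`.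
-/

open Filter

/-- An element of a free group is cyclically reduced if its reduced word does not
both start with a letter and end with the inverse of that letter. -/
def CyclicallyReduced {α : Type*} [DecidableEq α] (g : FreeGroup α) : Prop :=
  ∀ x : α × Bool, g.toWord.head? = some x → g.toWord.getLast? ≠ some (x.1, !x.2)

/-- Translation length in the free group: `ℓ(g) = inf_η ‖η g η⁻¹‖` for the word
length `‖·‖ = FreeGroup.norm` relative to the free basis. -/
noncomputable def freeTransLength {α : Type*} [DecidableEq α] (g : FreeGroup α) : ℕ :=
  sInf {n | ∃ η : FreeGroup α, (η * g * η⁻¹).norm = n}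

/-- Stable length `[g]_∞ = lim ‖gᵏ‖/k` in the free group. -/
noncomputable def freeStableLength {α : Type*} [DecidableEq α] (g : FreeGroup α) : ℝ :=
  liminf (fun k : ℕ => ((g ^ k).norm : ℝ) / k) atTop

namespace FreeGroup

variable {α : Type*} [DecidableEq α]

theorem cyclicallyReduced_iff_isCyclicallyReduced (g : FreeGroup α) :
    CyclicallyReduced g ↔ IsCyclicallyReduced g.toWord := by
  rw [isCyclicallyReduced_iff, CyclicallyReduced]
  simp only [isReduced_toWord, true_and, Option.mem_def]
  constructor
  · intro h a ha b hb hab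
    by_contra hne
    exact h b hb (ha.trans (congrArg some (Prod.ext hab (Bool.eq_not_iff.mpr hne))))
  · intro h x hx hlast
    simpa using h _ hlast x hx rfl

theorem toWord_pow_of_cyclicallyReduced {g : FreeGroup α} (hg : CyclicallyReduced g) (k : ℕ) :
    (g ^ k).toWord = (List.replicate k g.toWord).flatten := by
  have hpow := (g.cyclicallyReduced_iff_isCyclicallyReduced.mp hg).flatten_replicate k
  rw [toWord_pow, hpow.isReduced.reduce_eq]

theorem norm_pow_of_cyclicallyReduced {g : FreeGroup α} (hg : CyclicallyReduced g) (k : ℕ) :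
    (g ^ k).norm = k * g.norm := by
  simp [norm, toWord_pow_of_cyclicallyReduced hg]

theorem freeStableLength_of_cyclicallyReduced {g : FreeGroup α} (hg : CyclicallyReduced g) :
    freeStableLength g = g.norm := by
  have h : ∀ᶠ k : ℕ in atTop, ((g ^ k).norm : ℝ) / k = g.norm := by
    filter_upwards [eventually_ne_atTop 0] with k hk
    rw [norm_pow_of_cyclicallyReduced hg, Nat.cast_mul,
      mul_div_cancel_left₀ _ (Nat.cast_ne_zero.mpr hk)]
  rw [freeStableLength, liminf_congr h, liminf_const]

theorem norm_pow_le (g : FreeGroup α) (k : ℕ) : (g ^ k).norm ≤ k * g.norm := by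
  induction k with
  | zero => simp
  | succ k ih =>
    rw [pow_succ, Nat.succ_mul]
    exact (norm_mul_le _ _).trans (by omega)

theorem norm_pow_le_norm_conj (g η : FreeGroup α) (k : ℕ) :
    (g ^ k).norm ≤ k * (η * g * η⁻¹).norm + 2 * η.norm := by
  have hconj : g ^ k = η⁻¹ * (η * g * η⁻¹) ^ k * η := by rw [conj_pow]; group
  calc (g ^ k).norm ≤ η⁻¹.norm + ((η * g * η⁻¹) ^ k).norm + η.norm := by
        rw [hconj]; exact (norm_mul_le _ _).trans (by grw [norm_mul_le])
    _ ≤ k * (η * g * η⁻¹).norm + 2 * η.norm := by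
        grw [norm_inv_eq, norm_pow_le]; omega

theorem norm_le_norm_conj_of_cyclicallyReduced {g : FreeGroup α} (hg : CyclicallyReduced g)
    (η : FreeGroup α) : g.norm ≤ (η * g * η⁻¹).norm := by
  by_contra! hlt
  have h := norm_pow_le_norm_conj g η (2 * η.norm + 1)
  rw [norm_pow_of_cyclicallyReduced hg] at h
  nlinarith

theorem norm_le_freeTransLength_of_cyclicallyReduced {g : FreeGroup α}
    (hg : CyclicallyReduced g) : g.norm ≤ freeTransLength g := by
  obtain ⟨η, hη⟩ : freeTransLength g ∈ {n | ∃ η : FreeGroup α, (η * g * η⁻¹).norm = n} :=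
    Nat.sInf_mem ⟨g.norm, 1, by simp⟩
  exact hη ▸ norm_le_norm_conj_of_cyclicallyReduced hg η

theorem norm_le_norm_mul_of_add_one (g : FreeGroup α) (t : α) : g.norm ≤ (g * of t).norm + 1 :=
  calc g.norm = (g * of t * (of t)⁻¹).norm := by rw [mul_inv_cancel_right]
    _ ≤ (g * of t).norm + 1 := by grw [norm_mul_le, norm_inv_eq, norm_of]

theorem toWord_mul_of {g : FreeGroup α} {t : α} (hlast : ∀ a ∈ g.toWord.getLast?, a.1 ≠ t) :
    (g * of t).toWord = g.toWord ++ [(t, true)] := by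
  rw [toWord_mul, toWord_of, IsReduced.reduce_eq]
  rw [IsReduced, List.isChain_append]
  exact ⟨isReduced_toWord, List.isChain_singleton _, fun a ha b hb h ↦
    (hlast a ha (by rw [List.head?_cons, Option.mem_some_iff] at hb; rw [h, ← hb])).elim⟩

theorem cyclicallyReduced_mul_of {g : FreeGroup α} {t : α}
    (hhead : ∀ a ∈ g.toWord.head?, a.1 ≠ t) (hlast : ∀ a ∈ g.toWord.getLast?, a.1 ≠ t) :
    CyclicallyReduced (g * of t) := by
  rw [cyclicallyReduced_iff_isCyclicallyReduced, isCyclicallyReduced_iff, toWord_mul_of hlast]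
  refine ⟨toWord_mul_of hlast ▸ isReduced_toWord, fun a ha b hb hab ↦ ?_⟩
  rw [List.getLast?_concat, Option.mem_some_iff] at ha
  rw [List.head?_append] at hb
  subst ha
  cases hg : g.toWord.head? with
  | none =>
    rw [hg, Option.none_or, List.head?_cons, Option.mem_some_iff] at hb
    exact congrArg Prod.snd hb
  | some c => simp_all

theorem exists_cyclicallyReduced_mul_of {u v : α} (huv : u ≠ v) (g : FreeGroup α) :
    ∃ h, (h = g ∨ h = g * of u ∨ h = g * of v) ∧ CyclicallyReduced h ∧ g.norm ≤ h.norm + 1 := by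
  by_cases hg : CyclicallyReduced g
  · exact ⟨g, Or.inl rfl, hg, Nat.le_succ _⟩
  simp only [CyclicallyReduced, not_forall, not_not] at hg
  obtain ⟨x, hhead, hlast⟩ := hg
  obtain ⟨t, ht, hxt⟩ : ∃ t, (t = u ∨ t = v) ∧ x.1 ≠ t := by
    by_cases hxu : x.1 = u
    · exact ⟨v, Or.inr rfl, hxu ▸ huv⟩
    · exact ⟨u, Or.inl rfl, hxu⟩
  refine ⟨g * of t, by rcases ht with rfl | rfl <;> simp, ?_, norm_le_norm_mul_of_add_one g t⟩
  exact cyclicallyReduced_mul_of (by simp_all) (by simp_all)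

end FreeGroup

/-- In a free group with free basis containing two distinct letters `u` and `v`,
for every `g` at least one of `g`, `gu`, `gv` is cyclically reduced; hence
`max([g]_∞, [gu]_∞, [gv]_∞) ≥ ‖g‖ − 1` and `‖g‖ ≤ max(ℓ(g), ℓ(gu), ℓ(gv)) + 1`.
In particular free groups have the U-property. -/
theorem free_group_U_property {α : Type*} [DecidableEq α]
    (u v : α) (huv : u ≠ v) (g : FreeGroup α) :
    (CyclicallyReduced g ∨ CyclicallyReduced (g * FreeGroup.of u) ∨
        CyclicallyReduced (g * FreeGroup.of v)) ∧
    max (freeStableLength g)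
        (max (freeStableLength (g * FreeGroup.of u))
             (freeStableLength (g * FreeGroup.of v)))
      ≥ (g.norm : ℝ) - 1 ∧
    (g.norm : ℝ) ≤ max (freeTransLength g : ℝ)
        (max (freeTransLength (g * FreeGroup.of u) : ℝ)
             (freeTransLength (g * FreeGroup.of v) : ℝ)) + 1 := by
  obtain ⟨h, hh, hcr, hnorm⟩ := FreeGroup.exists_cyclicallyReduced_mul_of huv g
  have hstable : (g.norm : ℝ) - 1 ≤ freeStableLength h := by
    rw [FreeGroup.freeStableLength_of_cyclicallyReduced hcr, sub_le_iff_le_add]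
    exact_mod_cast hnorm
  have htrans : (g.norm : ℝ) ≤ freeTransLength h + 1 := by
    have := FreeGroup.norm_le_freeTransLength_of_cyclicallyReduced hcr
    exact_mod_cast hnorm.trans (by omega)
  refine ⟨by rcases hh with rfl | rfl | rfl <;> simp [hcr], ?_, htrans.trans ?_⟩ <;>
    rcases hh with rfl | rfl | rfl <;> simp [hstable]
end
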